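/- arXiv:1707.07640 — 2 statements merged into one kernel-verified Lean document; each statement's English description precedes it below -/
import Mathlib

section
/- For 1 ≤ p < ∞, the projective tensor norm on ℓ^p_n ⊗ ℓ^1 coincides with the lattice p-norm: for x = Σ_{i=1}^n δ_i ⊗ x_i with x_i ∈ ℓ^1, the projective tensor norm of x equals ‖(Σ_i |x_i|^p)^{1/p}‖_{ℓ^1}, where the p-th powers, absolute values and p-th root are taken coordinatewise in ℓ^1. -/
/-!
The projective norm on `E ⊗ ℓ¹` is the `ℓ¹(E)`-norm of the sequence of columns `u_j ∈ E`
(for `a ⊗ b` the column sequence is `j ↦ b j • a`). From below: the `j`-th column of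
`Σ a_k ⊗ b_k` has norm at most `Σ_k ‖a_k‖ |b_k j|`, and summing over `j` gives
`Σ_k ‖a_k‖ ‖b_k‖`. From above: `Σ a_k ⊗ b_k` is also represented by its first `M` columns tensored
with unit vectors plus `Σ a_k ⊗ (tail of b_k after M)`, and the cost of the tails tends to zero.
For `E = ℓ^p_n` and `u = Σ δ_i ⊗ x_i` the `j`-th column is `(t_{ij})_i`.
-/

open scoped TensorProduct

/-- The projective tensor norm of an element of the algebraic tensor product of two
real normed spaces: the infimum of `Σ ‖a_k‖ ‖b_k‖` over all finite representations
`u = Σ a_k ⊗ b_k`. -/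
noncomputable def projTensorNorm {X Y : Type*} [NormedAddCommGroup X] [NormedAddCommGroup Y]
    [NormedSpace ℝ X] [NormedSpace ℝ Y] (u : X ⊗[ℝ] Y) : ℝ :=
  sInf {c : ℝ | ∃ (m : ℕ) (a : Fin m → X) (b : Fin m → Y),
    u = ∑ k, a k ⊗ₜ[ℝ] b k ∧ c = ∑ k, ‖a k‖ * ‖b k‖}

open Filter Finset

section Projective

variable {X Y : Type*} [NormedAddCommGroup X] [NormedAddCommGroup Y]
  [NormedSpace ℝ X] [NormedSpace ℝ Y]

lemma projTensorNorm_sum_tmul_le {ι : Type*} (s : Finset ι) (a : ι → X) (b : ι → Y) :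
    projTensorNorm (∑ k ∈ s, a k ⊗ₜ[ℝ] b k) ≤ ∑ k ∈ s, ‖a k‖ * ‖b k‖ := by
  let e := s.equivFin.symm
  refine csInf_le ⟨0, ?_⟩ ⟨s.card, fun k => a (e k), fun k => b (e k), ?_, ?_⟩
  · rintro c ⟨m, a, b, -, rfl⟩
    exact sum_nonneg fun k _ => mul_nonneg (norm_nonneg _) (norm_nonneg _)
  · rw [e.sum_comp (fun k => a k ⊗ₜ[ℝ] b k)]; exact (sum_coe_sort s _).symm
  · rw [e.sum_comp (fun k => ‖a k‖ * ‖b k‖)]; exact (sum_coe_sort s _).symm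

lemma le_projTensorNorm {c : ℝ} {u : X ⊗[ℝ] Y}
    (h : ∀ (m : ℕ) (a : Fin m → X) (b : Fin m → Y), u = ∑ k, a k ⊗ₜ[ℝ] b k →
      c ≤ ∑ k, ‖a k‖ * ‖b k‖) :
    c ≤ projTensorNorm u := by
  obtain ⟨m, a, b, hu⟩ := TensorProduct.exists_sum_tmul_eq u
  refine le_csInf ⟨_, m, a, b, hu, rfl⟩ ?_
  rintro _ ⟨m, a, b, hu, rfl⟩
  exact h m a b hu

end Projective

local notation "ℓ¹" => lp (fun _ : ℕ => ℝ) 1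

lemma lp.summable_abs_one {α : Type*} (b : lp (fun _ : α => ℝ) 1) : Summable fun j => |b j| := by
  simpa using (lp.memℓp b).summable (by simp)

lemma lp.norm_one_eq_tsum_abs {α : Type*} (b : lp (fun _ : α => ℝ) 1) : ‖b‖ = ∑' j, |b j| := by
  simp [lp.norm_eq_tsum_rpow (show 0 < (1 : ENNReal).toReal by simp)]

lemma lp.tendsto_norm_sub_sum_range_single (b : ℓ¹) :
    Tendsto (fun M => ‖b - ∑ j ∈ range M, lp.single 1 j (b j)‖) atTop (nhds 0) := by
  have h := (lp.hasSum_single ENNReal.one_ne_top b).tendsto_sum_nat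
  simpa only [norm_sub_rev b] using tendsto_iff_norm_sub_tendsto_zero.mp h

section L1Coord

variable {E : Type*} [NormedAddCommGroup E] [NormedSpace ℝ E]

/-- The `j`-th coordinate of the isometry `E ⊗_π ℓ¹ ≅ ℓ¹(E)`. -/
noncomputable def l1Coord (j : ℕ) : E ⊗[ℝ] ℓ¹ →ₗ[ℝ] E :=
  (TensorProduct.rid ℝ E).toLinearMap ∘ₗ TensorProduct.map LinearMap.id (lp.evalₗ _ 1 j)

lemma l1Coord_sum_tmul {ι : Type*} (s : Finset ι) (a : ι → E) (b : ι → ℓ¹) (j : ℕ) :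
    l1Coord j (∑ k ∈ s, a k ⊗ₜ[ℝ] b k) = ∑ k ∈ s, b k j • a k := by
  simp [l1Coord]

lemma norm_l1Coord_sum_tmul_le {ι : Type*} (s : Finset ι) (a : ι → E) (b : ι → ℓ¹) (j : ℕ) :
    ‖l1Coord j (∑ k ∈ s, a k ⊗ₜ[ℝ] b k)‖ ≤ ∑ k ∈ s, ‖a k‖ * |b k j| := by
  rw [l1Coord_sum_tmul]
  refine (norm_sum_le _ _).trans (sum_le_sum fun k _ => ?_)
  rw [norm_smul, Real.norm_eq_abs, mul_comm]

lemma summable_norm_l1Coord_sum_tmul {ι : Type*} (s : Finset ι) (a : ι → E) (b : ι → ℓ¹) :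
    Summable fun j => ‖l1Coord j (∑ k ∈ s, a k ⊗ₜ[ℝ] b k)‖ :=
  .of_nonneg_of_le (fun _ => norm_nonneg _) (norm_l1Coord_sum_tmul_le s a b)
    (summable_sum fun k _ => (lp.summable_abs_one (b k)).mul_left _)

lemma tsum_norm_l1Coord_sum_tmul_le {ι : Type*} (s : Finset ι) (a : ι → E) (b : ι → ℓ¹) :
    ∑' j, ‖l1Coord j (∑ k ∈ s, a k ⊗ₜ[ℝ] b k)‖ ≤ ∑ k ∈ s, ‖a k‖ * ‖b k‖ := by
  have hsumm : ∀ k ∈ s, Summable fun j => ‖a k‖ * |b k j| :=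
    fun k _ => (lp.summable_abs_one (b k)).mul_left _
  calc ∑' j, ‖l1Coord j (∑ k ∈ s, a k ⊗ₜ[ℝ] b k)‖
      ≤ ∑' j, ∑ k ∈ s, ‖a k‖ * |b k j| :=
        (summable_norm_l1Coord_sum_tmul s a b).tsum_le_tsum (norm_l1Coord_sum_tmul_le s a b)
          (summable_sum hsumm)
    _ = ∑ k ∈ s, ‖a k‖ * ‖b k‖ := by
        simp only [Summable.tsum_finsetSum hsumm, tsum_mul_left, lp.norm_one_eq_tsum_abs]

lemma sum_tmul_eq_sum_range_add {ι : Type*} (s : Finset ι) (a : ι → E) (b : ι → ℓ¹) (M : ℕ) :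
    ∑ k ∈ s, a k ⊗ₜ[ℝ] b k =
      ∑ j ∈ range M, l1Coord j (∑ k ∈ s, a k ⊗ₜ[ℝ] b k) ⊗ₜ[ℝ] lp.single 1 j 1 +
        ∑ k ∈ s, a k ⊗ₜ[ℝ] (b k - ∑ j ∈ range M, lp.single 1 j (b k j)) := by
  have hhead : ∑ k ∈ s, a k ⊗ₜ[ℝ] ∑ j ∈ range M, lp.single 1 j (b k j) =
      ∑ j ∈ range M, l1Coord j (∑ k ∈ s, a k ⊗ₜ[ℝ] b k) ⊗ₜ[ℝ] lp.single 1 j 1 := by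
    simp_rw [l1Coord_sum_tmul, TensorProduct.sum_tmul, TensorProduct.tmul_sum]
    rw [sum_comm]
    refine sum_congr rfl fun j _ => sum_congr rfl fun k _ => ?_
    rw [TensorProduct.smul_tmul, ← lp.single_smul, smul_eq_mul, mul_one]
  simp_rw [TensorProduct.tmul_sub, sum_sub_distrib, hhead, add_sub_cancel]

lemma projTensorNorm_le_sum_range_add {ι : Type*} (s : Finset ι) (a : ι → E) (b : ι → ℓ¹)
    (M : ℕ) :
    projTensorNorm (∑ k ∈ s, a k ⊗ₜ[ℝ] b k) ≤
      ∑ j ∈ range M, ‖l1Coord j (∑ k ∈ s, a k ⊗ₜ[ℝ] b k)‖ +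
        ∑ k ∈ s, ‖a k‖ * ‖b k - ∑ j ∈ range M, lp.single 1 j (b k j)‖ := by
  set u := ∑ k ∈ s, a k ⊗ₜ[ℝ] b k
  have h := projTensorNorm_sum_tmul_le ((range M).disjSum s)
    (Sum.elim (fun j => l1Coord j u) a)
    (Sum.elim (fun j => lp.single 1 j 1) fun k => b k - ∑ j ∈ range M, lp.single 1 j (b k j))
  simp only [sum_disjSum, Sum.elim_inl, Sum.elim_inr, lp.norm_single one_pos, norm_one,
    mul_one] at h
  rwa [← sum_tmul_eq_sum_range_add] at h

theorem projTensorNorm_eq_tsum_norm_l1Coord (u : E ⊗[ℝ] ℓ¹) :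
    projTensorNorm u = ∑' j, ‖l1Coord j u‖ := by
  obtain ⟨m, a, b, rfl⟩ := TensorProduct.exists_sum_tmul_eq u
  refine le_antisymm ?_ ?_
  · refine ge_of_tendsto' (x := atTop) ?_ (projTensorNorm_le_sum_range_add univ a b)
    have htail := tendsto_finsetSum univ fun k _ =>
      (lp.tendsto_norm_sub_sum_range_single (b k)).const_mul ‖a k‖
    simpa using (summable_norm_l1Coord_sum_tmul univ a b).hasSum.tendsto_sum_nat.add htail
  · refine le_projTensorNorm fun m' a' b' hu => ?_
    rw [hu]
    exact tsum_norm_l1Coord_sum_tmul_le univ a' b'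

end L1Coord

lemma PiLp.norm_toLp_ofReal {ι : Type*} [Fintype ι] {p : ℝ} (hp : 0 < p) (f : ι → ℝ) :
    ‖WithLp.toLp (ENNReal.ofReal p) f‖ = (∑ i, |f i| ^ p) ^ (1 / p) := by
  rw [PiLp.norm_eq_sum (by rwa [ENNReal.toReal_ofReal hp.le]), ENNReal.toReal_ofReal hp.le]
  simp only [Real.norm_eq_abs]

lemma PiLp.sum_smul_toLp_single {ι : Type*} [Fintype ι] [DecidableEq ι] (p : ENNReal)
    (f : ι → ℝ) : ∑ i, f i • WithLp.toLp p (Pi.single i (1 : ℝ)) = WithLp.toLp p f := by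
  simpa [PiLp.basisFun_apply] using (PiLp.basisFun p ℝ ι).sum_repr (WithLp.toLp p f)

/-- For `1 ≤ p < ∞`, the projective tensor norm on `ℓ^p_n ⊗ ℓ¹` coincides
with the lattice `p`-norm: for `x = Σ_{i=1}^n δ_i ⊗ x_i` with `x_i ∈ ℓ¹`, writing
`x_i = (t_{ij})_j`, the projective norm of `x` equals `Σ_j (Σ_i |t_{ij}|^p)^{1/p}`. -/
theorem projTensorNorm_lp_n_tensor_l1 (p : ℝ) (hp : 1 ≤ p) [Fact (1 ≤ ENNReal.ofReal p)] (n : ℕ)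
    (x : Fin n → lp (fun _ : ℕ => ℝ) 1) :
    projTensorNorm (∑ i, ((WithLp.equiv (ENNReal.ofReal p) (Fin n → ℝ)).symm
        (Pi.single i (1 : ℝ))) ⊗ₜ[ℝ] x i)
      = ∑' j : ℕ, (∑ i, |(x i : ∀ _ : ℕ, ℝ) j| ^ p) ^ (1 / p) := by
  rw [projTensorNorm_eq_tsum_norm_l1Coord]
  refine tsum_congr fun j => ?_
  rw [l1Coord_sum_tmul]
  simp only [WithLp.equiv_symm_apply, PiLp.sum_smul_toLp_single]
  exact PiLp.norm_toLp_ofReal (zero_lt_one.trans_le hp) _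
end

section
/- Let X be a Banach space, E an n-dimensional subspace, and suppose there exists a linear isomorphism u : E → E′ ⊆ W onto a subspace of a Banach space W with ‖u‖ ≤ 1 and ‖u⁻¹‖ ≤ 1 + ε, where W is 1-injective (i.e., W has the metric extension property). If dim W = N < ∞, then there exists a subspace Y ⊆ X of codimension at most N containing E and a projection P : Y → E with ‖P‖ ≤ 1 + ε. -/
universe u

/-- Let `X` be a Banach space, `E ⊆ X` an `n`-dimensional subspace,
`W` a `1`-injective Banach space of finite dimension `N`, and `u : E → W` a linear
isomorphism onto its image with `‖u‖ ≤ 1` and `‖u⁻¹‖ ≤ 1 + ε`. Then there is a subspace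
`Y ⊆ X` of codimension at most `N` containing `E` and a projection `P : Y → E` with
`‖P‖ ≤ 1 + ε`. -/
theorem almost_complementation_via_injective_space
    (X : Type u) [NormedAddCommGroup X] [NormedSpace ℝ X] [CompleteSpace X]
    (W : Type u) [NormedAddCommGroup W] [NormedSpace ℝ W] [FiniteDimensional ℝ W]
    (hinj : ∀ (A B : Type u) [NormedAddCommGroup A] [NormedSpace ℝ A]
      [NormedAddCommGroup B] [NormedSpace ℝ B] (j : A →L[ℝ] B), Isometry j →
      ∀ v : A →L[ℝ] W, ∃ vext : B →L[ℝ] W, (∀ a, vext (j a) = v a) ∧ ‖vext‖ = ‖v‖)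
    (N n : ℕ) (hW : Module.finrank ℝ W = N)
    (E : Submodule ℝ X) (hE : Module.finrank ℝ E = n)
    (ε : ℝ) (hε : 0 < ε)
    (u : E →L[ℝ] W) (hu : ‖u‖ ≤ 1) (huinj : Function.Injective u)
    (huinv : ∀ e : E, ‖e‖ ≤ (1 + ε) * ‖u e‖) :
    ∃ Y : Submodule ℝ X, E ≤ Y ∧ Module.finrank ℝ (X ⧸ Y) ≤ N ∧
      ∃ P : Y →L[ℝ] X, (∀ y : Y, P y ∈ E) ∧
        (∀ (e : X) (hy : e ∈ Y), e ∈ E → P ⟨e, hy⟩ = e) ∧ ‖P‖ ≤ 1 + ε := by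
  -- extension of u
  have hiso : Isometry (E.subtypeL : E →L[ℝ] X) :=
    AddMonoidHomClass.isometry_of_norm _ (fun a => rfl)
  obtain ⟨ut, hut, hnorm⟩ := hinj E X E.subtypeL hiso u
  have hutnorm : ‖ut‖ ≤ 1 := hnorm ▸ hu
  set F : Submodule ℝ W := LinearMap.range (u : E →ₗ[ℝ] W) with hF
  set Y : Submodule ℝ X := Submodule.comap (ut : X →ₗ[ℝ] W) F with hY
  have hEY : E ≤ Y := by
    intro e he
    simp only [hY, Submodule.mem_comap]
    exact ⟨⟨e, he⟩, (hut ⟨e, he⟩).symm⟩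
  -- codimension
  have hker : LinearMap.ker ((F.mkQ).comp (ut : X →ₗ[ℝ] W)) = Y := by
    ext x
    simp [hY, Submodule.mem_comap, LinearMap.mem_ker]
  have hcodim : Module.finrank ℝ (X ⧸ Y) ≤ N := by
    have hle : Y ≤ LinearMap.ker ((F.mkQ).comp (ut : X →ₗ[ℝ] W)) := hker.ge
    have hinj2 : Function.Injective (Y.liftQ _ hle) := by
      rw [← LinearMap.ker_eq_bot, Submodule.ker_liftQ_eq_bot _ _ _ hker.le]
    calc Module.finrank ℝ (X ⧸ Y) ≤ Module.finrank ℝ (W ⧸ F) :=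
          LinearMap.finrank_le_finrank_of_injective hinj2
      _ ≤ Module.finrank ℝ W := Submodule.finrank_quotient_le F
      _ = N := hW
  -- equivalence onto range
  have hEfd : FiniteDimensional ℝ E :=
    Module.Finite.of_injective (u : E →ₗ[ℝ] W) huinj
  let equiv : E ≃ₗ[ℝ] F := LinearEquiv.ofInjective (u : E →ₗ[ℝ] W) huinj
  have hmemF : ∀ y : Y, ut ((Y.subtypeL : Y →L[ℝ] X) y) ∈ F := fun y => y.2
  let T : Y →L[ℝ] F := (ut.comp Y.subtypeL).codRestrict F hmemF
  let P : Y →L[ℝ] X :=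
    E.subtypeL.comp ((LinearMap.toContinuousLinearMap (equiv.symm : F →ₗ[ℝ] E)).comp T)
  have hPapp : ∀ y : Y, P y = ((equiv.symm (T y) : E) : X) := fun y => rfl
  refine ⟨Y, hEY, hcodim, P, fun y => ((equiv.symm (T y) : E)).2, ?_, ?_⟩
  · intro x hy hx
    have h1 : T ⟨x, hy⟩ = equiv ⟨x, hx⟩ := by
      apply Subtype.ext
      show ut x = ((equiv ⟨x, hx⟩ : F) : W)
      have h0 : ((equiv ⟨x, hx⟩ : F) : W) = u ⟨x, hx⟩ :=
        LinearEquiv.ofInjective_apply (h := huinj) (u : E →ₗ[ℝ] W) ⟨x, hx⟩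
      rw [h0]
      exact hut ⟨x, hx⟩
    rw [hPapp, h1, LinearEquiv.symm_apply_apply]
  · apply ContinuousLinearMap.opNorm_le_bound _ (by positivity)
    intro y
    rw [hPapp]
    have h2 : (u : E →ₗ[ℝ] W) (equiv.symm (T y)) = ((T y : F) : W) :=
      (LinearEquiv.ofInjective_apply (h := huinj) (u : E →ₗ[ℝ] W) (equiv.symm (T y))).symm.trans
        (congrArg Subtype.val (equiv.apply_symm_apply (T y)))
    have h3 : ‖((equiv.symm (T y) : E) : X)‖ ≤ (1 + ε) * ‖((T y : F) : W)‖ := by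
      have := huinv (equiv.symm (T y))
      rwa [show (u (equiv.symm (T y)) : W) = ((T y : F) : W) from h2] at this
    have h4 : ‖((T y : F) : W)‖ = ‖ut (y : X)‖ := rfl
    have h5 : ‖ut (y : X)‖ ≤ ‖(y : X)‖ := by
      calc ‖ut (y : X)‖ ≤ ‖ut‖ * ‖(y : X)‖ := ut.le_opNorm _
        _ ≤ 1 * ‖(y : X)‖ := mul_le_mul_of_nonneg_right hutnorm (norm_nonneg _)
        _ = ‖(y : X)‖ := one_mul _
    have h6 : ‖(y : X)‖ = ‖y‖ := rfl
    calc ‖((equiv.symm (T y) : E) : X)‖ ≤ (1 + ε) * ‖ut (y : X)‖ := by rw [← h4]; exact h3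
      _ ≤ (1 + ε) * ‖y‖ := by rw [← h6]; exact mul_le_mul_of_nonneg_left h5 (by linarith)
end
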